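/- Let h > 0 be a real number and let g : ℝ → ℂ be a continuous function such that g(kh) = 0 for every integer k. Then for every natural number m ≥ 1 there exists a continuous function F_m : ℝ → ℂ such that F_m(kh) = 0 for every integer k and Δ_h^m F_m = g. -/

import Mathlib

/-!
Rescaling reduces to `h = 1`. There an antidifference of `g` is obtained by summing `g` along
`x - 1, x - 2, …` down to the cell `[0, 1)` (with the opposite sign for negative `x`): on each
cell `[n, n + 1)` this is a finite sum of translates of `g`, and since `g` vanishes on `ℤ` every
such sum vanishes at the integers, which makes the pieces glue continuously. Iterating `m` times
gives `Δ^m F = g`.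
-/

/-- Forward difference operator: `(fd h f) x = f (x + h) - f x`. -/
def fd {α : Type*} [Add α] (h : α) (f : α → ℂ) : α → ℂ := fun x => f (x + h) - f x

section SignedPartialSum

open Finset

variable {M : Type*} [AddCommGroup M]

/-- The discrete antiderivative of `a : ℤ → M` vanishing at `0`: for `n ≥ 0` it is
`a 0 + ⋯ + a (n - 1)`, for `n < 0` it is `-(a n + ⋯ + a (-1))`. -/
noncomputable def signedPartialSum (a : ℤ → M) (n : ℤ) : M :=
  ∑ j ∈ Ico 0 n, a j - ∑ j ∈ Ico n 0, a j

theorem signedPartialSum_add_one (a : ℤ → M) (n : ℤ) :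
    signedPartialSum a (n + 1) = signedPartialSum a n + a n := by
  unfold signedPartialSum
  rcases le_or_gt 0 n with hn | hn
  · rw [← insert_Ico_right_eq_Ico_add_one hn, sum_insert right_notMem_Ico,
      Ico_eq_empty_of_le hn, Ico_eq_empty_of_le (show (0 : ℤ) ≤ n + 1 by omega)]
    abel
  · rw [← insert_Ico_add_one_left_eq_Ico hn, sum_insert (by simp),
      Ico_eq_empty_of_le hn.le, Ico_eq_empty_of_le (show n + 1 ≤ 0 by omega)]
    abel

theorem signedPartialSum_eq_zero {a : ℤ → M} (ha : ∀ j, a j = 0) (n : ℤ) :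
    signedPartialSum a n = 0 := by
  simp [signedPartialSum, ha]

end SignedPartialSum

open Set

theorem continuous_of_continuousOn_Icc_intCast {α β : Type*} [Ring α] [LinearOrder α]
    [IsStrictOrderedRing α] [FloorRing α] [TopologicalSpace α] [OrderTopology α]
    [TopologicalSpace β] {f : α → β} (hf : ∀ n : ℤ, ContinuousOn f (Icc (n : α) (n + 1))) :
    Continuous f := by
  refine continuous_iff_continuousAt.2 fun x => continuousAt_iff_continuous_left_right.2 ⟨?_, ?_⟩
  · have hlt : ((⌈x⌉ - 1 : ℤ) : α) < x := by
      push_cast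
      exact sub_lt_iff_lt_add.2 (Int.ceil_lt_add_one x)
    have hle : x ≤ ((⌈x⌉ - 1 : ℤ) : α) + 1 := by
      push_cast
      simpa using Int.le_ceil x
    exact (hf (⌈x⌉ - 1) x ⟨hlt.le, hle⟩).mono_of_mem_nhdsWithin <|
      Filter.mem_of_superset (Icc_mem_nhdsLE hlt) (Icc_subset_Icc_right hle)
  · have hx : x ∈ Icc (⌊x⌋ : α) (⌊x⌋ + 1) := ⟨Int.floor_le x, (Int.lt_floor_add_one x).le⟩
    exact (hf ⌊x⌋ x hx).mono_of_mem_nhdsWithin <|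
      Filter.mem_of_superset (Icc_mem_nhdsGE (Int.lt_floor_add_one x))
        (Icc_subset_Icc_left (Int.floor_le x))

theorem fd_comp_div (h : ℝ) (hh : h ≠ 0) (F : ℝ → ℂ) :
    fd h (fun x => F (x / h)) = fun x => fd 1 F (x / h) := by
  funext x
  simp only [fd, add_div, div_self hh]

section UnitAntidiff

variable (g : ℝ → ℂ)

/-- On the cell `[n, n + 1)` this is the sum `g (x - 1) + ⋯ + g (x - n)`, signed for `n < 0`. -/
noncomputable def unitAntidiff (x : ℝ) : ℂ :=
  signedPartialSum (fun j => g (Int.fract x + j)) ⌊x⌋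

theorem fd_one_unitAntidiff : fd 1 (unitAntidiff g) = g := by
  funext x
  simp only [fd, unitAntidiff, Int.fract_add_one, Int.floor_add_one, signedPartialSum_add_one,
    Int.fract_add_floor, add_sub_cancel_left]

variable {g}

theorem unitAntidiff_intCast (hgz : ∀ k : ℤ, g k = 0) (k : ℤ) : unitAntidiff g k = 0 := by
  simp only [unitAntidiff, Int.fract_intCast, zero_add]
  exact signedPartialSum_eq_zero hgz _

theorem unitAntidiff_eqOn_Icc (hgz : ∀ k : ℤ, g k = 0) (n : ℤ) :
    EqOn (unitAntidiff g) (fun x => signedPartialSum (fun j => g (x - n + j)) n)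
      (Icc (n : ℝ) (n + 1)) := by
  rintro x ⟨hnx, hxn⟩
  rcases hxn.lt_or_eq with hxn | rfl
  · have hfloor : ⌊x⌋ = n := Int.floor_eq_iff.2 ⟨hnx, hxn⟩
    simp only [unitAntidiff, Int.fract, hfloor]
  · rw [show (n : ℝ) + 1 = (n + 1 : ℤ) by push_cast; ring, unitAntidiff_intCast hgz]
    refine (signedPartialSum_eq_zero (fun j => ?_) n).symm
    simpa using hgz (n + 1 - n + j)

theorem continuous_unitAntidiff (hg : Continuous g) (hgz : ∀ k : ℤ, g k = 0) :
    Continuous (unitAntidiff g) :=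
  continuous_of_continuousOn_Icc_intCast fun n =>
    ContinuousOn.congr (by unfold signedPartialSum; fun_prop) (unitAntidiff_eqOn_Icc hgz n)

end UnitAntidiff

theorem exists_continuous_fd_eq (h : ℝ) (hh : h ≠ 0) (g : ℝ → ℂ) (hg : Continuous g)
    (hgz : ∀ k : ℤ, g (k * h) = 0) :
    ∃ F : ℝ → ℂ, Continuous F ∧ (∀ k : ℤ, F (k * h) = 0) ∧ fd h F = g := by
  set g₁ : ℝ → ℂ := fun y => g (y * h)
  refine ⟨fun x => unitAntidiff g₁ (x / h), ?_, fun k => ?_, ?_⟩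
  · exact (continuous_unitAntidiff (by fun_prop) hgz).comp (continuous_id.div_const h)
  · simpa [hh] using unitAntidiff_intCast hgz k
  · rw [fd_comp_div h hh, fd_one_unitAntidiff]
    funext x
    simp [g₁, hh]

theorem stmt8_general (h : ℝ) (hh : 0 < h) (g : ℝ → ℂ) (hg : Continuous g)
    (hgz : ∀ k : ℤ, g (k * h) = 0) (m : ℕ) :
    ∃ F : ℝ → ℂ, Continuous F ∧ (∀ k : ℤ, F (k * h) = 0) ∧ (fd h)^[m] F = g := by
  induction m generalizing g with
  | zero => exact ⟨g, hg, hgz, rfl⟩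
  | succ m ih =>
    obtain ⟨F₁, hF₁c, hF₁z, hF₁d⟩ := exists_continuous_fd_eq h hh.ne' g hg hgz
    obtain ⟨F, hFc, hFz, hFd⟩ := ih F₁ hF₁c hF₁z
    exact ⟨F, hFc, hFz, by rw [Function.iterate_succ_apply', hFd, hF₁d]⟩

theorem stmt8 (h : ℝ) (hh : 0 < h) (g : ℝ → ℂ) (hg : Continuous g)
    (hgz : ∀ k : ℤ, g (k * h) = 0) (m : ℕ) (hm : 1 ≤ m) :
    ∃ F : ℝ → ℂ, Continuous F ∧ (∀ k : ℤ, F (k * h) = 0) ∧ (fd h)^[m] F = g :=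
  stmt8_general h hh g hg hgz m
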